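/- arXiv:2508.19345 — 2 statements merged into one kernel-verified Lean document; each statement's English description precedes it below -/
import Mathlib

section
/- Consider N battery units over an undirected connected communication graph running the privacy-preserving decomposed average unit state estimator: dx̂_{a,i}^α/dt = ẋ_i^α(t) − β Σ_{j=1}^N a_ij (x̂_{a,i}^α(t) − x̂_{a,j}^α(t)) − β (x̂_{a,i}^α(t) − x̂_{a,i}^β(t)) and dx̂_{a,i}^β/dt = ẋ_i^β(t) − β (x̂_{a,i}^β(t) − x̂_{a,i}^α(t)), with initializations x̂_{a,i}^α(0) = x_i^α(0), x̂_{a,i}^β(0) = x_i^β(0), where x_i^α(0) + x_i^β(0) = 2η x_i(0) and ẋ_i^α(t) + ẋ_i^β(t) = 2η ẋ_i(t) with ẋ_i^α, ẋ_i^β bounded. Then both tracking deviations x̂_{a,i}^α(t) − η x_a(t) and x̂_{a,i}^β(t) − η x_a(t) are ultimately bounded; precisely, limsup_{t→∞} |x̂_{a,i}^α(t) − η x_a(t)| ≤ γ_s'/(β λ_2') and limsup_{t→∞} |x̂_{a,i}^β(t) − η x_a(t)| ≤ γ_s'/(β λ_2'), where γ_s' = sup_{τ≥0} ‖(I_{2N}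 − (1/(2N)) 1_{2N} 1_{2N}^T) ẋ^{decomp}(τ)‖ (assumed finite), ẋ^{decomp} stacks the 2N derivatives (ẋ_1^α,…,ẋ_N^α, ẋ_1^β,…,ẋ_N^β), and λ_2' > 0 is the second smallest eigenvalue of L' = [[L + I_N, −I_N], [−I_N, I_N]]. In particular the bounds can be made arbitrarily small by choosing β sufficiently large. -/
/-!
Stack the two estimator copies into `X = (x̂ᵅ, x̂ᵝ)`, so that `Ẋ = D - β L' X` with
`D = (ẋᵅ, ẋᵝ)`. The matrix `L'` is the Laplacian of `G` with a pendant vertex attached to every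
vertex, so its rows and its columns sum to zero. Zero column sums make `∑ X` evolve like
`∑ D = 2η ∑ ẋ`; with the initialisation, the mean of `X` is exactly `η xₐ` at all times. Zero row
sums make the deviation `δ = X - mean X` obey `δ̇ = (D - mean D) - β L' δ`, so by Cauchy–Schwarz
and Young `V = ‖δ‖²` satisfies `V̇ ≤ 2γ‖δ‖ - 2βλ₂'V ≤ -βλ₂'V + γ²/(βλ₂')`. Grönwall then gives
`limsup V ≤ (γ/(βλ₂'))²`, and each coordinate of `δ` is bounded by `‖δ‖`.
-/

open Filter Matrix

/-- Euclidean norm of a finitely-indexed real vector. -/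
noncomputable def eucNorm {ι : Type*} [Fintype ι] (v : ι → ℝ) : ℝ :=
  Real.sqrt (∑ i, v i ^ 2)

open Topology Fintype
open scoped BigOperators

theorem eventually_le_of_hasDerivAt_le_neg_mul_add {V V' : ℝ → ℝ} {a b : ℝ} (ha : 0 < a)
    (hV : ∀ t, 0 ≤ t → HasDerivAt V (V' t) t) (hV' : ∀ t, 0 ≤ t → V' t ≤ -a * V t + b) :
    ∀ ε > 0, ∀ᶠ t in atTop, V t ≤ b / a + ε := by
  intro ε hε
  have hgronwall (t : ℝ) (ht : 0 ≤ t) : V t ≤ gronwallBound (V 0) (-a) b t := by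
    simpa using le_gronwallBound_of_liminf_deriv_right_le
      (fun s hs => (hV s hs.1).continuousAt.continuousWithinAt)
      (fun s hs r hr => (hV s hs.1).hasDerivWithinAt.liminf_right_slope_le hr)
      le_rfl (fun s hs => hV' s hs.1) t ⟨ht, le_rfl⟩
  have hlim : Tendsto (gronwallBound (V 0) (-a) b) atTop (𝓝 (b / a)) := by
    have hexp : Tendsto (fun t => Real.exp (-a * t)) atTop (𝓝 0) :=
      Real.tendsto_exp_atBot.comp <| tendsto_id.const_mul_atTop_of_neg (neg_lt_zero.mpr ha)
    rw [gronwallBound_of_K_ne_0 (neg_ne_zero.mpr ha.ne')]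
    convert (hexp.mul_const (V 0 - b / a)).const_add (b / a) using 1
    · ext t
      rw [div_neg]
      ring
    · simp
  filter_upwards [eventually_ge_atTop 0,
    hlim.eventually (eventually_le_nhds (lt_add_of_pos_right _ hε))] with t ht hle
  exact (hgronwall t ht).trans hle

theorem dotProduct_le_eucNorm_mul_eucNorm {ι : Type*} [Fintype ι] (u v : ι → ℝ) :
    u ⬝ᵥ v ≤ eucNorm u * eucNorm v :=
  Real.sum_mul_le_sqrt_mul_sqrt _ u v

theorem sq_eucNorm {ι : Type*} [Fintype ι] (v : ι → ℝ) : eucNorm v ^ 2 = ∑ k, v k ^ 2 :=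
  Real.sq_sqrt (by positivity)

theorem abs_le_eucNorm {ι : Type*} [Fintype ι] (v : ι → ℝ) (k : ι) : |v k| ≤ eucNorm v := by
  rw [eucNorm, ← Real.sqrt_sq_eq_abs]
  exact Real.sqrt_le_sqrt (Finset.single_le_sum (fun j _ => sq_nonneg (v j)) (Finset.mem_univ k))

theorem eq_of_hasDerivAt_eq_of_nonneg {f g f' : ℝ → ℝ} (hf : ∀ t, 0 ≤ t → HasDerivAt f (f' t) t)
    (hg : ∀ t, 0 ≤ t → HasDerivAt g (f' t) t) (h0 : f 0 = g 0) {t : ℝ} (ht : 0 ≤ t) :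
    f t = g t :=
  eq_of_has_deriv_right_eq (fun s hs => (hf s hs.1).hasDerivWithinAt)
    (fun s hs => (hg s hs.1).hasDerivWithinAt)
    (fun s hs => (hf s hs.1).continuousAt.continuousWithinAt)
    (fun s hs => (hg s hs.1).continuousAt.continuousWithinAt) h0 t ⟨ht, le_rfl⟩

theorem expect_sum_elim {V : Type*} [Fintype V] (u w : V → ℝ) :
    𝔼 k, Sum.elim u w k = (∑ i, u i + ∑ i, w i) / (2 * Fintype.card V) := by
  rw [Fintype.expect_eq_sum_div_card, Fintype.sum_sum_type, Fintype.card_sum]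
  simp only [Sum.elim_inl, Sum.elim_inr]
  push_cast
  ring

section Consensus

variable {ι : Type*} [Fintype ι] {M : Matrix ι ι ℝ}

theorem sum_mulVec_eq_zero (hcol : 1 ᵥ* M = 0) (v : ι → ℝ) : ∑ k, (M *ᵥ v) k = 0 := by
  rw [← one_dotProduct, dotProduct_mulVec, hcol, zero_dotProduct]

theorem mulVec_balance (hrow : M *ᵥ 1 = 0) (v : ι → ℝ) : M *ᵥ balance v = M *ᵥ v := by
  have hconst : Function.const ι (𝔼 y, v y) = (𝔼 y, v y) • 1 := by ext; simp
  rw [balance, mulVec_sub, hconst, mulVec_smul, hrow, smul_zero, sub_zero]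

variable {X D : ℝ → ι → ℝ} {β t : ℝ}

theorem hasDerivAt_sum_of_one_vecMul_eq_zero (hcol : 1 ᵥ* M = 0)
    (hX : ∀ k, HasDerivAt (fun s => X s k) (D t k - β * (M *ᵥ X t) k) t) :
    HasDerivAt (fun s => ∑ k, X s k) (∑ k, D t k) t := by
  have h := HasDerivAt.fun_sum (u := Finset.univ) fun k _ => hX k
  rwa [Finset.sum_sub_distrib, ← Finset.mul_sum, sum_mulVec_eq_zero hcol, mul_zero,
    sub_zero] at h

theorem hasDerivAt_balance (hcol : 1 ᵥ* M = 0) (hrow : M *ᵥ 1 = 0)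
    (hX : ∀ k, HasDerivAt (fun s => X s k) (D t k - β * (M *ᵥ X t) k) t) (k : ι) :
    HasDerivAt (fun s => balance (X s) k)
      (balance (D t) k - β * (M *ᵥ balance (X t)) k) t := by
  have hmean := (hasDerivAt_sum_of_one_vecMul_eq_zero hcol hX).div_const (Fintype.card ι)
  have hfun : (fun s => balance (X s) k) = fun s => X s k - (∑ j, X s j) / card ι := by
    ext s
    rw [balance_apply, Fintype.expect_eq_sum_div_card]
  rw [hfun, balance_apply, Fintype.expect_eq_sum_div_card, mulVec_balance hrow]
  refine ((hX k).sub hmean).congr_deriv ?_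
  ring

theorem two_mul_mul_le_mul_sq_add_sq_div {a s γ : ℝ} (ha : 0 < a) :
    2 * (s * γ) ≤ a * s ^ 2 + γ ^ 2 / a := by
  have hsq : a * s ^ 2 + γ ^ 2 / a - 2 * (s * γ) = (a * s - γ) ^ 2 / a := by
    field_simp
    ring
  rw [← sub_nonneg, hsq]
  positivity

theorem hasDerivAt_sum_sq_balance (hcol : 1 ᵥ* M = 0) (hrow : M *ᵥ 1 = 0)
    (hX : ∀ k, HasDerivAt (fun s => X s k) (D t k - β * (M *ᵥ X t) k) t) :
    HasDerivAt (fun s => ∑ k, balance (X s) k ^ 2)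
      (2 * (balance (X t) ⬝ᵥ balance (D t) - β * (balance (X t) ⬝ᵥ M *ᵥ balance (X t)))) t := by
  refine (HasDerivAt.fun_sum (u := Finset.univ) fun k _ =>
    (hasDerivAt_balance hcol hrow hX k).fun_pow 2).congr_deriv ?_
  simp only [dotProduct, Finset.mul_sum, ← Finset.sum_sub_distrib]
  refine Finset.sum_congr rfl fun k _ => ?_
  push_cast
  ring

theorem two_mul_dotProduct_sub_le {lam γ : ℝ} (hβ : 0 < β) (hlam : 0 < lam)
    (hcoer : ∀ δ : ι → ℝ, ∑ k, δ k = 0 → lam * ∑ k, δ k ^ 2 ≤ δ ⬝ᵥ M *ᵥ δ)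
    {δ d : ι → ℝ} (hδ : ∑ k, δ k = 0) (hd : eucNorm d ≤ γ) :
    2 * (δ ⬝ᵥ d - β * (δ ⬝ᵥ M *ᵥ δ)) ≤ -(β * lam) * ∑ k, δ k ^ 2 + γ ^ 2 / (β * lam) := by
  have hCS : δ ⬝ᵥ d ≤ eucNorm δ * γ :=
    (dotProduct_le_eucNorm_mul_eucNorm _ _).trans
      (mul_le_mul_of_nonneg_left hd (Real.sqrt_nonneg _))
  have hquad := mul_le_mul_of_nonneg_left (hcoer δ hδ) hβ.le
  have hyoung := two_mul_mul_le_mul_sq_add_sq_div (s := eucNorm δ) (γ := γ) (mul_pos hβ hlam)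
  rw [sq_eucNorm] at hyoung
  linarith

theorem eventually_abs_balance_le {lam γ : ℝ} (hcol : 1 ᵥ* M = 0) (hrow : M *ᵥ 1 = 0)
    (hβ : 0 < β) (hlam : 0 < lam)
    (hcoer : ∀ δ : ι → ℝ, ∑ k, δ k = 0 → lam * ∑ k, δ k ^ 2 ≤ δ ⬝ᵥ M *ᵥ δ)
    (hX : ∀ t, 0 ≤ t → ∀ k, HasDerivAt (fun s => X s k) (D t k - β * (M *ᵥ X t) k) t)
    (hD : ∀ t, 0 ≤ t → eucNorm (balance (D t)) ≤ γ) :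
    ∀ ε > 0, ∀ᶠ t in atTop, ∀ k, |balance (X t) k| ≤ γ / (β * lam) + ε := by
  intro ε hε
  have hP : 0 < β * lam := mul_pos hβ hlam
  have hγ : 0 ≤ γ / (β * lam) := div_nonneg ((Real.sqrt_nonneg _).trans (hD 0 le_rfl)) hP.le
  filter_upwards [eventually_le_of_hasDerivAt_le_neg_mul_add hP
    (fun t ht => hasDerivAt_sum_sq_balance hcol hrow (hX t ht))
    (fun t ht => two_mul_dotProduct_sub_le hβ hlam hcoer (sum_balance _) (hD t ht))
    (ε ^ 2) (by positivity)]
    with t hVt k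
  have hV : eucNorm (balance (X t)) ^ 2 ≤ (γ / (β * lam) + ε) ^ 2 := by
    rw [sq_eucNorm]
    calc _ ≤ γ ^ 2 / (β * lam) / (β * lam) + ε ^ 2 := hVt
      _ = (γ / (β * lam)) ^ 2 + ε ^ 2 := by ring
      _ ≤ (γ / (β * lam) + ε) ^ 2 := by nlinarith [mul_nonneg hγ hε.le]
  exact (abs_le_eucNorm _ k).trans (pow_le_pow_iff_left₀ (Real.sqrt_nonneg _) (by positivity)
    two_ne_zero |>.mp hV)

end Consensus

namespace SimpleGraph

variable {V : Type*} [Fintype V] [DecidableEq V] (G : SimpleGraph V) [DecidableRel G.Adj]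

def decompLapMatrix : Matrix (V ⊕ V) (V ⊕ V) ℝ :=
  fromBlocks (G.lapMatrix ℝ + 1) (-1) (-1) 1

theorem lapMatrix_mulVec_apply_eq_sum_adjMatrix_mul_sub (a : V → ℝ) (i : V) :
    (G.lapMatrix ℝ *ᵥ a) i = ∑ j, G.adjMatrix ℝ i j * (a i - a j) := by
  rw [lapMatrix_mulVec_apply, ← adjMatrix_mulVec_apply, ← adjMatrix_mulVec_const_apply]
  simp [mulVec, dotProduct, mul_sub]

theorem decompLapMatrix_mulVec_inl (a b : V → ℝ) (i : V) :
    (G.decompLapMatrix *ᵥ Sum.elim a b) (Sum.inl i)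
      = ∑ j, G.adjMatrix ℝ i j * (a i - a j) + (a i - b i) := by
  simp [decompLapMatrix, fromBlocks_mulVec, add_mulVec, neg_mulVec,
    lapMatrix_mulVec_apply_eq_sum_adjMatrix_mul_sub]
  ring

theorem decompLapMatrix_mulVec_inr (a b : V → ℝ) (i : V) :
    (G.decompLapMatrix *ᵥ Sum.elim a b) (Sum.inr i) = b i - a i := by
  simp [decompLapMatrix, fromBlocks_mulVec, neg_mulVec]
  ring

theorem decompLapMatrix_mulVec_one : G.decompLapMatrix *ᵥ 1 = 0 := by
  have hL : G.lapMatrix ℝ *ᵥ 1 = 0 := G.lapMatrix_mulVec_const_eq_zero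
  ext (i | i) <;> simp [decompLapMatrix, fromBlocks_mulVec, add_mulVec, neg_mulVec, hL]

theorem isSymm_decompLapMatrix : G.decompLapMatrix.IsSymm :=
  (G.isSymm_lapMatrix ℝ |>.add isSymm_one).fromBlocks (by simp) isSymm_one

theorem one_vecMul_decompLapMatrix : 1 ᵥ* G.decompLapMatrix = 0 := by
  rw [← G.isSymm_decompLapMatrix.eq, vecMul_transpose, decompLapMatrix_mulVec_one]

theorem hasDerivAt_sum_elim {a b da db : ℝ → V → ℝ} {β t : ℝ}
    (ha : ∀ i, HasDerivAt (fun s => a s i)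
      (da t i - β * ∑ j, G.adjMatrix ℝ i j * (a t i - a t j) - β * (a t i - b t i)) t)
    (hb : ∀ i, HasDerivAt (fun s => b s i) (db t i - β * (b t i - a t i)) t) (k : V ⊕ V) :
    HasDerivAt (fun s => Sum.elim (a s) (b s) k)
      (Sum.elim (da t) (db t) k - β * (G.decompLapMatrix *ᵥ Sum.elim (a t) (b t)) k) t := by
  rcases k with i | i
  · refine (ha i).congr_deriv ?_
    rw [decompLapMatrix_mulVec_inl, Sum.elim_inl]
    ring
  · exact (hb i).congr_deriv (by rw [decompLapMatrix_mulVec_inr, Sum.elim_inr])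

end SimpleGraph

theorem statement9_general
    (N : ℕ) (G : SimpleGraph (Fin N)) [DecidableRel G.Adj]
    (η β : ℝ) (hβ : 0 < β)
    (x xα xβ xhatα xhatβ : ℝ → Fin N → ℝ)
    (hx : ∀ i, ContDiff ℝ 1 (fun t => x t i))
    -- state decomposition: xᵢᵅ(0) + xᵢᵝ(0) = 2η xᵢ(0) and ẋᵢᵅ + ẋᵢᵝ = 2η ẋᵢ
    (h0 : ∀ i, xα 0 i + xβ 0 i = 2 * η * x 0 i)
    (hd : ∀ i, ∀ t : ℝ, 0 ≤ t →
        deriv (fun s => xα s i) t + deriv (fun s => xβ s i) t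
          = 2 * η * deriv (fun s => x s i) t)
    -- decomposed estimator dynamics
    (hdynα : ∀ i, ∀ t : ℝ, 0 ≤ t → HasDerivAt (fun s => xhatα s i)
        (deriv (fun s => xα s i) t
          - β * ∑ j, (G.adjMatrix ℝ) i j * (xhatα t i - xhatα t j)
          - β * (xhatα t i - xhatβ t i)) t)
    (hdynβ : ∀ i, ∀ t : ℝ, 0 ≤ t → HasDerivAt (fun s => xhatβ s i)
        (deriv (fun s => xβ s i) t - β * (xhatβ t i - xhatα t i)) t)
    (hinitα : ∀ i, xhatα 0 i = xα 0 i)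
    (hinitβ : ∀ i, xhatβ 0 i = xβ 0 i)
    (γs' lam2' : ℝ)
    -- γₛ' = sup_{τ ≥ 0} ‖(I_{2N} − (1/(2N)) 1 1ᵀ) ẋ^{decomp}(τ)‖, assumed finite
    (hγ : IsLUB ((fun τ : ℝ => eucNorm (fun k : Fin N ⊕ Fin N =>
        Sum.elim (fun i => deriv (fun s => xα s i) τ)
                 (fun i => deriv (fun s => xβ s i) τ) k
          - ((∑ i, deriv (fun s => xα s i) τ) + ∑ i, deriv (fun s => xβ s i) τ)
              / (2 * (N : ℝ)))) '' Set.Ici (0 : ℝ)) γs')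
    -- λ₂' is the second smallest eigenvalue of L' = [[L + I, −I], [−I, I]]
    (hlam2pos : 0 < lam2')
    (hlam2min : ∀ δ : Fin N ⊕ Fin N → ℝ, (∑ k, δ k) = 0 →
        lam2' * (∑ k, δ k ^ 2) ≤ δ ⬝ᵥ (Matrix.fromBlocks (G.lapMatrix ℝ + 1) (-1) (-1)
          (1 : Matrix (Fin N) (Fin N) ℝ)).mulVec δ) :
    ∀ i, ∀ ε > (0 : ℝ), ∀ᶠ t in atTop,
      |xhatα t i - η * ((∑ j, x t j) / (N : ℝ))| ≤ γs' / (β * lam2') + ε ∧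
      |xhatβ t i - η * ((∑ j, x t j) / (N : ℝ))| ≤ γs' / (β * lam2') + ε := by
  intro i ε hε
  set X : ℝ → Fin N ⊕ Fin N → ℝ := fun t => Sum.elim (xhatα t) (xhatβ t)
  set D : ℝ → Fin N ⊕ Fin N → ℝ := fun t =>
    Sum.elim (fun j => deriv (fun s => xα s j) t) (fun j => deriv (fun s => xβ s j) t)
  have hX (t : ℝ) (ht : 0 ≤ t) (k : Fin N ⊕ Fin N) :
      HasDerivAt (fun s => X s k) (D t k - β * (G.decompLapMatrix *ᵥ X t) k) t :=
    G.hasDerivAt_sum_elim (da := fun t j => deriv (fun s => xα s j) t)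
      (db := fun t j => deriv (fun s => xβ s j) t) (hdynα · t ht) (hdynβ · t ht) k
  have hsum (t : ℝ) (ht : 0 ≤ t) : ∑ k, X t k = 2 * η * ∑ j, x t j := by
    refine eq_of_hasDerivAt_eq_of_nonneg (g := fun s => 2 * η * ∑ j, x s j)
      (fun t ht => hasDerivAt_sum_of_one_vecMul_eq_zero G.one_vecMul_decompLapMatrix (hX t ht))
      (fun s hs => ?_) ?_ ht
    · refine ((HasDerivAt.fun_sum fun j _ =>
        ((hx j).differentiable one_ne_zero s).hasDerivAt).const_mul (2 * η)).congr_deriv ?_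
      simp [D, Finset.mul_sum, ← hd _ s hs, Finset.sum_add_distrib]
    · simp [X, Finset.mul_sum, hinitα, hinitβ, ← h0, Finset.sum_add_distrib]
  have hmean (t : ℝ) (ht : 0 ≤ t) : 𝔼 k, X t k = η * ((∑ j, x t j) / N) := by
    have hN : (N : ℝ) ≠ 0 := Nat.cast_ne_zero.mpr i.pos.ne'
    rw [Fintype.expect_eq_sum_div_card, hsum t ht, Fintype.card_sum, Fintype.card_fin]
    push_cast
    field_simp
    ring
  have hD (t : ℝ) (ht : 0 ≤ t) : eucNorm (balance (D t)) ≤ γs' := by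
    have hbal : balance (D t) = fun k => D t k
        - (∑ j, deriv (fun s => xα s j) t + ∑ j, deriv (fun s => xβ s j) t) / (2 * N) := by
      ext k
      rw [balance_apply, expect_sum_elim, Fintype.card_fin]
    rw [hbal]
    exact hγ.1 ⟨t, ht, rfl⟩
  filter_upwards [eventually_abs_balance_le G.one_vecMul_decompLapMatrix
    G.decompLapMatrix_mulVec_one hβ hlam2pos hlam2min hX hD ε hε, eventually_ge_atTop 0]
    with t hbal ht
  rw [← hmean t ht]
  exact ⟨hbal (Sum.inl i), hbal (Sum.inr i)⟩

/-- Theorem 2: the privacy-preserving decomposed average unit state estimator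
`dx̂ᵅₐᵢ/dt = ẋᵢᵅ − β Σⱼ aᵢⱼ(x̂ᵅₐᵢ − x̂ᵅₐⱼ) − β(x̂ᵅₐᵢ − x̂ᵝₐᵢ)`,
`dx̂ᵝₐᵢ/dt = ẋᵢᵝ − β(x̂ᵝₐᵢ − x̂ᵅₐᵢ)`, with the state-decomposition initializations, yields
ultimately bounded tracking deviations from `η xₐ(t)`:
`limsup_{t→∞} |x̂ᵅₐᵢ(t) − η xₐ(t)| ≤ γₛ'/(β λ₂')` and likewise for `x̂ᵝₐᵢ`, where `γₛ'` is the
supremum over `τ ≥ 0` of `‖(I_{2N} − (1/(2N)) 𝟙𝟙ᵀ) ẋ^{decomp}(τ)‖` and `λ₂' > 0` is the second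
smallest eigenvalue of `L' = [[L + I, −I], [−I, I]]`. -/
theorem statement9
    (N : ℕ) (G : SimpleGraph (Fin N)) [DecidableRel G.Adj] (hG : G.Connected)
    (η β : ℝ) (hη : 0 < η) (hβ : 0 < β)
    (x xα xβ xhatα xhatβ : ℝ → Fin N → ℝ)
    (hx : ∀ i, ContDiff ℝ 1 (fun t => x t i))
    (hxα : ∀ i, ContDiff ℝ 1 (fun t => xα t i))
    (hxβ : ∀ i, ContDiff ℝ 1 (fun t => xβ t i))
    -- the decomposed derivative signals are bounded
    (hbdd : ∃ M : ℝ, ∀ i, ∀ t : ℝ, 0 ≤ t →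
        |deriv (fun s => xα s i) t| ≤ M ∧ |deriv (fun s => xβ s i) t| ≤ M)
    -- state decomposition: xᵢᵅ(0) + xᵢᵝ(0) = 2η xᵢ(0) and ẋᵢᵅ + ẋᵢᵝ = 2η ẋᵢ
    (h0 : ∀ i, xα 0 i + xβ 0 i = 2 * η * x 0 i)
    (hd : ∀ i, ∀ t : ℝ, 0 ≤ t →
        deriv (fun s => xα s i) t + deriv (fun s => xβ s i) t
          = 2 * η * deriv (fun s => x s i) t)
    -- decomposed estimator dynamics
    (hdynα : ∀ i, ∀ t : ℝ, 0 ≤ t → HasDerivAt (fun s => xhatα s i)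
        (deriv (fun s => xα s i) t
          - β * ∑ j, (G.adjMatrix ℝ) i j * (xhatα t i - xhatα t j)
          - β * (xhatα t i - xhatβ t i)) t)
    (hdynβ : ∀ i, ∀ t : ℝ, 0 ≤ t → HasDerivAt (fun s => xhatβ s i)
        (deriv (fun s => xβ s i) t - β * (xhatβ t i - xhatα t i)) t)
    (hinitα : ∀ i, xhatα 0 i = xα 0 i)
    (hinitβ : ∀ i, xhatβ 0 i = xβ 0 i)
    (γs' lam2' : ℝ)
    -- γₛ' = sup_{τ ≥ 0} ‖(I_{2N} − (1/(2N)) 1 1ᵀ) ẋ^{decomp}(τ)‖, assumed finite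
    (hγ : IsLUB ((fun τ : ℝ => eucNorm (fun k : Fin N ⊕ Fin N =>
        Sum.elim (fun i => deriv (fun s => xα s i) τ)
                 (fun i => deriv (fun s => xβ s i) τ) k
          - ((∑ i, deriv (fun s => xα s i) τ) + ∑ i, deriv (fun s => xβ s i) τ)
              / (2 * (N : ℝ)))) '' Set.Ici (0 : ℝ)) γs')
    -- λ₂' is the second smallest eigenvalue of L' = [[L + I, −I], [−I, I]]
    (hlam2pos : 0 < lam2')
    (hlam2eig : ∃ v : Fin N ⊕ Fin N → ℝ, v ≠ 0 ∧ (∑ k, v k) = 0 ∧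
        (Matrix.fromBlocks (G.lapMatrix ℝ + 1) (-1) (-1)
          (1 : Matrix (Fin N) (Fin N) ℝ)).mulVec v = lam2' • v)
    (hlam2min : ∀ δ : Fin N ⊕ Fin N → ℝ, (∑ k, δ k) = 0 →
        lam2' * (∑ k, δ k ^ 2) ≤ δ ⬝ᵥ (Matrix.fromBlocks (G.lapMatrix ℝ + 1) (-1) (-1)
          (1 : Matrix (Fin N) (Fin N) ℝ)).mulVec δ) :
    ∀ i, ∀ ε > (0 : ℝ), ∀ᶠ t in atTop,
      |xhatα t i - η * ((∑ j, x t j) / (N : ℝ))| ≤ γs' / (β * lam2') + ε ∧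
      |xhatβ t i - η * ((∑ j, x t j) / (N : ℝ))| ≤ γs' / (β * lam2') + ε :=
  statement9_general N G η β hβ x xα xβ xhatα xhatβ hx h0 hd hdynα hdynβ hinitα hinitβ γs' lam2' hγ
    hlam2pos hlam2min
end

section
/- Consider the privacy-preserving leader-following estimator dp̂_{a,i}/dt = −κ( Σ_{j=1}^N a_ij (p̂_{a,i}(t) − p̂_{a,j}(t)) + b_i (p̂_{a,i}(t) − σ p_a(t)) ), p̂_{a,i}(0) = 0, where σ > 0 is a fixed scaling constant, b_i ∈ {0,1} with b_i = 1 for at least one i, and p_a is continuously differentiable with |ṗ_a(t)| ≤ ψ/N. Then there exists γ_p > 0, independent of κ, such that for every κ > 0 and every i, limsup_{t→∞} |p̂_{a,i}(t) − σ p_a(t)| ≤ ψ γ_p / κ; i.e., each local estimate converges exponentially to a neighborhood of the scaled average desired power σ p_a(t), with the bound shrinking as κ grows. -/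
/-!
The error `e = p̂ - σ pₐ 𝟙` obeys `ė = -κ (L + B) e - σ ṗₐ 𝟙`, where `L` is the Laplacian and
`B = diag b`. For a connected graph with at least one pinned node `L + B` is positive definite,
so `eᵀ (L + B) e ≥ μ |e|²` for some `μ > 0`. Absorbing the cross term by AM–GM gives
`d/dt |e|² ≤ -κμ |e|² + N (σψ/N)² / (κμ)`, and Grönwall's inequality yields
`limsup |e|² ≤ N (σψ/N)² / (κμ)²`, i.e. `limsup |eᵢ| ≤ ψ γₚ / κ` with `γₚ = √N σ / (N μ)`.
-/

open Filter Finset Matrix Metric Real Topology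

theorem exists_pos_mul_norm_sq_le {E : Type*} [NormedAddCommGroup E] [NormedSpace ℝ E]
    [FiniteDimensional ℝ E] {Q : E → ℝ} (hQ : Continuous Q)
    (hsmul : ∀ (c : ℝ) (x : E), Q (c • x) = c ^ 2 * Q x) (hpos : ∀ x ≠ 0, 0 < Q x) :
    ∃ μ > 0, ∀ x, μ * ‖x‖ ^ 2 ≤ Q x := by
  have hQ0 : Q 0 = 0 := by simpa using hsmul 0 0
  rcases subsingleton_or_nontrivial E with hE | hE
  · exact ⟨1, one_pos, fun x => by simp [Subsingleton.elim x 0, hQ0]⟩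
  obtain ⟨u, hu, hmin⟩ := (isCompact_sphere (0 : E) 1).exists_isMinOn
    (NormedSpace.sphere_nonempty.2 zero_le_one) hQ.continuousOn
  refine ⟨Q u, hpos u (ne_zero_of_mem_unit_sphere ⟨u, hu⟩), fun x => ?_⟩
  rcases eq_or_ne x 0 with rfl | hx
  · simp [hQ0]
  have hx' : ‖x‖ ≠ 0 := norm_ne_zero_iff.2 hx
  have hxu : ‖x‖⁻¹ • x ∈ sphere (0 : E) 1 := by simp [norm_smul, hx']
  calc Q u * ‖x‖ ^ 2 ≤ Q (‖x‖⁻¹ • x) * ‖x‖ ^ 2 := by gcongr; exact hmin hxu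
    _ = Q x := by rw [hsmul]; field_simp

theorem Matrix.PosDef.exists_pos_mul_dotProduct_self_le {ι : Type*} [Fintype ι]
    {M : Matrix ι ι ℝ} (hM : M.PosDef) : ∃ μ > 0, ∀ x : ι → ℝ, μ * (x ⬝ᵥ x) ≤ x ⬝ᵥ M *ᵥ x := by
  obtain ⟨μ, hμ, h⟩ := exists_pos_mul_norm_sq_le (E := EuclideanSpace ℝ ι)
    (Q := fun y => y.ofLp ⬝ᵥ M *ᵥ y.ofLp) (by fun_prop)
    (fun c y => by simp [mulVec_smul, smul_dotProduct, dotProduct_smul]; ring)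
    (fun y hy => by simpa using hM.dotProduct_mulVec_pos (x := y.ofLp) (by simpa using hy))
  refine ⟨μ, hμ, fun x => ?_⟩
  have hx := h (WithLp.toLp 2 x)
  rw [EuclideanSpace.norm_sq_eq] at hx
  simpa [dotProduct, sq] using hx

namespace SimpleGraph

variable {V : Type*} [Fintype V] [DecidableEq V] (G : SimpleGraph V) [DecidableRel G.Adj]

theorem lapMatrix_mulVec_apply_eq_sum {R : Type*} [CommRing R] (x : V → R) (i : V) :
    (G.lapMatrix R *ᵥ x) i = ∑ j, G.adjMatrix R i j * (x i - x j) := by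
  rw [lapMatrix_mulVec_apply, degree_eq_sum_if_adj, sum_mul]
  simp [mul_sub, sum_sub_distrib, adjMatrix_apply, neighborFinset_eq_filter, sum_filter]

theorem posDef_lapMatrix_add_diagonal (hG : G.Connected) {b : V → ℝ} (hb : 0 ≤ b) {i₀ : V}
    (hi₀ : b i₀ ≠ 0) : (G.lapMatrix ℝ + diagonal b).PosDef := by
  refine .of_dotProduct_mulVec_pos ((isHermitian_lapMatrix ℝ G).add (isHermitian_diagonal b))
    fun x hx => ?_
  have hD : x ⬝ᵥ diagonal b *ᵥ x = ∑ i, b i * x i ^ 2 := by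
    simp only [dotProduct, mulVec_diagonal]; exact sum_congr rfl fun i _ => by ring
  rw [star_trivial, add_mulVec, dotProduct_add, ← toLinearMap₂'_apply', hD]
  have hL : 0 ≤ toLinearMap₂' ℝ (G.lapMatrix ℝ) x x := by
    rw [lapMatrix_toLinearMap₂']; positivity
  have hB : ∀ i ∈ univ, 0 ≤ b i * x i ^ 2 := fun i _ => mul_nonneg (hb i) (sq_nonneg _)
  by_contra! hle
  have hconst := (lapMatrix_toLinearMap₂'_apply'_eq_zero_iff_forall_reachable G x).1
    (by linarith [sum_nonneg hB])
  have hx₀ : x i₀ = 0 := by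
    have := (sum_eq_zero_iff_of_nonneg hB).1 (by linarith [sum_nonneg hB]) i₀ (mem_univ _)
    simpa [hi₀] using this
  exact hx (funext fun j => (hconst j i₀ (hG.preconnected j i₀)).trans hx₀)

end SimpleGraph

theorem eventually_le_of_hasDerivAt_le_neg_mul_add_s10 {f f' : ℝ → ℝ} {α β ε : ℝ} (hα : 0 < α)
    (hε : 0 < ε) (hf : ∀ t, 0 ≤ t → HasDerivAt f (f' t) t)
    (hbound : ∀ t, 0 ≤ t → f' t ≤ -α * f t + β) : ∀ᶠ t in atTop, f t ≤ β / α + ε := by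
  have hle : ∀ t, 0 ≤ t → f t ≤ gronwallBound (f 0) (-α) β t := by
    intro t ht
    simpa using le_gronwallBound_of_liminf_deriv_right_le
      (fun x hx => (hf x hx.1).continuousAt.continuousWithinAt)
      (fun x hx r hr => (hf x hx.1).hasDerivWithinAt.liminf_right_slope_le hr) le_rfl
      (fun x hx => hbound x hx.1) t ⟨ht, le_rfl⟩
  have hexp : Tendsto (fun t => exp (-α * t)) atTop (𝓝 0) :=
    tendsto_exp_atBot.comp (tendsto_id.const_mul_atTop_of_neg (neg_neg_of_pos hα))
  have hlim : Tendsto (gronwallBound (f 0) (-α) β) atTop (𝓝 (β / α)) := by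
    rw [gronwallBound_of_K_ne_0 (neg_ne_zero.2 hα.ne')]
    convert (hexp.const_mul (f 0)).add ((hexp.sub_const 1).const_mul (β / -α)) using 2
    field_simp
    ring
  filter_upwards [eventually_ge_atTop 0, hlim.eventually (gt_mem_nhds (lt_add_of_pos_right _ hε))]
    with t ht hlt
  exact (hle t ht).trans hlt.le

theorem eventually_abs_le_of_hasDerivAt_neg_mulVec_add {ι : Type*} [Fintype ι]
    {M : Matrix ι ι ℝ} {μ κ D ε : ℝ} (hμ : 0 < μ) (hM : ∀ x, μ * (x ⬝ᵥ x) ≤ x ⬝ᵥ M *ᵥ x)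
    (hκ : 0 < κ) (hε : 0 < ε) {e : ℝ → ι → ℝ} {d : ℝ → ℝ}
    (he : ∀ k t, 0 ≤ t → HasDerivAt (fun s => e s k) (-κ * (M *ᵥ e t) k + d t) t)
    (hd : ∀ t, 0 ≤ t → |d t| ≤ D) (i : ι) :
    ∀ᶠ t in atTop, |e t i| ≤ √(Fintype.card ι) * D / (κ * μ) + ε := by
  set n : ℝ := (Fintype.card ι : ℝ)
  have hκμ : 0 < κ * μ := mul_pos hκ hμ
  have hD : 0 ≤ D := (abs_nonneg _).trans (hd 0 le_rfl)
  have hV : ∀ t, 0 ≤ t → HasDerivAt (fun s => e s ⬝ᵥ e s)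
      (∑ k, 2 * e t k * (-κ * (M *ᵥ e t) k + d t)) t := fun t ht => by
    simp only [dotProduct]
    exact HasDerivAt.fun_sum fun k _ =>
      ((he k t ht).fun_mul (he k t ht)).congr_deriv (by ring)
  have hV' : ∀ t, 0 ≤ t → ∑ k, 2 * e t k * (-κ * (M *ᵥ e t) k + d t) ≤
      -(κ * μ) * (e t ⬝ᵥ e t) + n * D ^ 2 / (κ * μ) := fun t ht => by
    have hd2 : d t ^ 2 ≤ D ^ 2 := sq_le_sq' (abs_le.1 (hd t ht)).1 (abs_le.1 (hd t ht)).2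
    have hcross : ∀ k, 2 * e t k * d t ≤ κ * μ * e t k ^ 2 + (κ * μ)⁻¹ * D ^ 2 := fun k =>
      (two_mul_le_add_mul_sq hκμ).trans (by gcongr)
    calc ∑ k, 2 * e t k * (-κ * (M *ᵥ e t) k + d t)
        = -2 * κ * (e t ⬝ᵥ M *ᵥ e t) + ∑ k, 2 * e t k * d t := by
          simp only [dotProduct, mul_sum, ← sum_add_distrib]; exact sum_congr rfl fun k _ => by ring
      _ ≤ -2 * κ * (μ * (e t ⬝ᵥ e t)) + ∑ k, (κ * μ * e t k ^ 2 + (κ * μ)⁻¹ * D ^ 2) := by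
          have hcoer := hM (e t)
          have hsum := sum_le_sum fun k (_ : k ∈ univ) => hcross k
          nlinarith
      _ = -(κ * μ) * (e t ⬝ᵥ e t) + n * D ^ 2 / (κ * μ) := by
          simp only [sum_add_distrib, ← mul_sum, sum_const, card_univ, dotProduct, nsmul_eq_mul, sq]
          field_simp
          ring
  filter_upwards [eventually_le_of_hasDerivAt_le_neg_mul_add_s10 hκμ (pow_pos hε 2) hV hV'] with t ht
  refine abs_le_of_sq_le_sq ?_ (by positivity)
  calc e t i ^ 2 ≤ e t ⬝ᵥ e t := by
        simpa [dotProduct, sq] using single_le_sum (fun k _ => mul_self_nonneg (e t k)) (mem_univ i)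
    _ ≤ n * D ^ 2 / (κ * μ) / (κ * μ) + ε ^ 2 := ht
    _ ≤ (√n * D / (κ * μ) + ε) ^ 2 := by
        have hn : √n ^ 2 = n := sq_sqrt (Nat.cast_nonneg _)
        have : 0 ≤ √n * D / (κ * μ) := by positivity
        rw [add_sq, div_pow, mul_pow, hn]
        field_simp
        nlinarith [mul_nonneg (mul_nonneg hD hκμ.le) (mul_nonneg hε.le (sqrt_nonneg n))]

theorem statement10_general
    (N : ℕ) (G : SimpleGraph (Fin N)) [DecidableRel G.Adj] (hG : G.Connected)
    (b : Fin N → ℝ) (hb : ∀ i, b i = 0 ∨ b i = 1) (hb1 : ∃ i, b i = 1)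
    (σ : ℝ) (hσ : 0 < σ)
    (pa : ℝ → ℝ) (hpa : ContDiff ℝ 1 pa)
    (ψ : ℝ)
    (hpa' : ∀ t : ℝ, 0 ≤ t → |deriv pa t| ≤ ψ / (N : ℝ)) :
    ∃ γp > (0 : ℝ), ∀ κ > (0 : ℝ), ∀ phat : ℝ → Fin N → ℝ,
      -- the scaled leader-following estimator dynamics
      (∀ i, ∀ t : ℝ, 0 ≤ t → HasDerivAt (fun s => phat s i)
        (-κ * ((∑ j, (G.adjMatrix ℝ) i j * (phat t i - phat t j))
          + b i * (phat t i - σ * pa t))) t) →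
      (∀ i, phat 0 i = 0) →
      -- limsup_{t→∞} |p̂ₐᵢ(t) − σ pₐ(t)| ≤ ψ γₚ / κ
      ∀ i, ∀ ε > (0 : ℝ), ∀ᶠ t in atTop, |phat t i - σ * pa t| ≤ ψ * γp / κ + ε := by
  obtain ⟨i₀, hi₀⟩ := hb1
  have hb₀ : 0 ≤ b := fun i => by rcases hb i with h | h <;> simp [h]
  obtain ⟨μ, hμ, hM⟩ := (G.posDef_lapMatrix_add_diagonal hG hb₀
    (hi₀ ▸ one_ne_zero)).exists_pos_mul_dotProduct_self_le
  have hN : (0 : ℝ) < N := by exact_mod_cast i₀.pos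
  refine ⟨√N * σ / (N * μ), by positivity, fun κ hκ phat hphat _ i ε hε => ?_⟩
  have herr : ∀ k t, 0 ≤ t → HasDerivAt (fun s => phat s k - σ * pa s)
      (-κ * ((G.lapMatrix ℝ + diagonal b) *ᵥ fun j => phat t j - σ * pa t) k
        + -σ * deriv pa t) t := fun k t ht => by
    refine ((hphat k t ht).fun_sub
      ((hpa.differentiable one_ne_zero t).hasDerivAt.const_mul σ)).congr_deriv ?_
    rw [add_mulVec, Pi.add_apply, G.lapMatrix_mulVec_apply_eq_sum, mulVec_diagonal]
    simp only [sub_sub_sub_cancel_right]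
    ring
  have hd : ∀ t, 0 ≤ t → |-σ * deriv pa t| ≤ σ * (ψ / N) := fun t ht => by
    rw [abs_mul, abs_neg, abs_of_pos hσ]
    exact mul_le_mul_of_nonneg_left (hpa' t ht) hσ.le
  filter_upwards [eventually_abs_le_of_hasDerivAt_neg_mulVec_add hμ hM hκ hε herr hd i] with t ht
  rw [Fintype.card_fin] at ht
  convert ht using 2
  ring

/-- the privacy-preserving leader-following estimator
`dp̂ₐᵢ/dt = −κ(Σⱼ aᵢⱼ (p̂ₐᵢ − p̂ₐⱼ) + bᵢ(p̂ₐᵢ − σ pₐ))`, `p̂ₐᵢ(0) = 0`, with privacy scaling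
`σ > 0`: there exists `γₚ > 0`, independent of `κ`, such that for every `κ > 0` and every `i`,
`limsup_{t→∞} |p̂ₐᵢ(t) − σ pₐ(t)| ≤ ψ γₚ / κ`. -/
theorem statement10
    (N : ℕ) (G : SimpleGraph (Fin N)) [DecidableRel G.Adj] (hG : G.Connected)
    (b : Fin N → ℝ) (hb : ∀ i, b i = 0 ∨ b i = 1) (hb1 : ∃ i, b i = 1)
    (σ : ℝ) (hσ : 0 < σ)
    (pa : ℝ → ℝ) (hpa : ContDiff ℝ 1 pa)
    (ψ : ℝ) (hψ : 0 < ψ)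
    (hpa' : ∀ t : ℝ, 0 ≤ t → |deriv pa t| ≤ ψ / (N : ℝ)) :
    ∃ γp > (0 : ℝ), ∀ κ > (0 : ℝ), ∀ phat : ℝ → Fin N → ℝ,
      -- the scaled leader-following estimator dynamics
      (∀ i, ∀ t : ℝ, 0 ≤ t → HasDerivAt (fun s => phat s i)
        (-κ * ((∑ j, (G.adjMatrix ℝ) i j * (phat t i - phat t j))
          + b i * (phat t i - σ * pa t))) t) →
      (∀ i, phat 0 i = 0) →
      -- limsup_{t→∞} |p̂ₐᵢ(t) − σ pₐ(t)| ≤ ψ γₚ / κ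
      ∀ i, ∀ ε > (0 : ℝ), ∀ᶠ t in atTop, |phat t i - σ * pa t| ≤ ψ * γp / κ + ε :=
  statement10_general N G hG b hb hb1 σ hσ pa hpa ψ hpa'
end
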